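/- Let k, r1, r2, n, m, m', p, p' be positive integers with p, p' prime, kn+r2 = m·p, kn+r1 = m'·p', r1 > r2, and σ(m)(p-1) = σ(m')(p'-1). If σ(m)·m' = m·σ(m') and m > 1, then m' = m + r1 - r2. -/

import Mathlib

open ArithmeticFunction
open scoped ArithmeticFunction.sigma

/-! Multiplying `σ(m)(p-1) = σ(m')(p'-1)` by `m` and using `m σ(m') = σ(m) m'` gives
`σ(m) m (p-1) = σ(m) m' (p'-1)`, so `mp - m = m'p' - m'`; since `m'p' - mp = r₁ - r₂`,
this is `m' = m + r₁ - r₂`. -/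

theorem mul_eq_mul_of_sigma_mul_eq_sigma_mul {m m' : ℕ} {a b : ℤ} (hm : 0 < m)
    (hab : (σ 1 m : ℤ) * a = σ 1 m' * b) (hprop : σ 1 m * m' = m * σ 1 m') :
    (m : ℤ) * a = m' * b := by
  have hσ : (σ 1 m : ℤ) ≠ 0 := by exact_mod_cast (sigma_pos 1 m hm.ne').ne'
  have hprop' : (σ 1 m : ℤ) * m' = m * σ 1 m' := by exact_mod_cast hprop
  refine mul_left_cancel₀ hσ ?_
  linear_combination (m : ℤ) * hab - b * hprop'

theorem stmt1_general (k r1 r2 n m m' p p' : ℕ)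
    (hm0 : 0 < m)
    (h2 : k * n + r2 = m * p) (h1 : k * n + r1 = m' * p')
    (hσ : (σ 1 m : ℤ) * ((p : ℤ) - 1) = (σ 1 m' : ℤ) * ((p' : ℤ) - 1))
    (hprop : σ 1 m * m' = m * σ 1 m') :
    (m' : ℤ) = (m : ℤ) + (r1 : ℤ) - (r2 : ℤ) := by
  have hmp : (m : ℤ) * (p - 1) = m' * (p' - 1) :=
    mul_eq_mul_of_sigma_mul_eq_sigma_mul hm0 hσ hprop
  have h2' : (k * n + r2 : ℤ) = m * p := by exact_mod_cast h2
  have h1' : (k * n + r1 : ℤ) = m' * p' := by exact_mod_cast h1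
  linear_combination hmp - h1' + h2'

theorem stmt1 (k r1 r2 n m m' p p' : ℕ)
    (hk : 0 < k) (hr2 : 0 < r2) (hn : 0 < n)
    (hm0 : 0 < m) (hm' : 0 < m')
    (hp : p.Prime) (hp' : p'.Prime)
    (h2 : k * n + r2 = m * p) (h1 : k * n + r1 = m' * p')
    (hr : r2 < r1)
    (hσ : (σ 1 m : ℤ) * ((p : ℤ) - 1) = (σ 1 m' : ℤ) * ((p' : ℤ) - 1))
    (hprop : σ 1 m * m' = m * σ 1 m') (hm1 : 1 < m) :
    (m' : ℤ) = (m : ℤ) + (r1 : ℤ) - (r2 : ℤ) :=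
  stmt1_general k r1 r2 n m m' p p' hm0 h2 h1 hσ hprop
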